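/- Under the Heisenberg inversion I, the Cygan distance transforms by ρ_c(I(p), I(q)) = ρ_c(p,q) / ( ||p||_c · ||q||_c ) for all p, q ∈ H_n \ {0}. -/

import Mathlib

/-!
Encode a point `p = (ξ, v)` by the complex number `A p = ‖ξ‖² - i v`, so that `‖p‖_c² = |A p|`.
Expanding the Heisenberg product gives `A (p⁻¹ q) = conj (A p) + A q - 2 ⟪ξ_p, ξ_q⟫`, and the
inversion satisfies `A (I p) = (A p)⁻¹`, with the horizontal part scaled by `(A p)⁻¹`. Substituting,
`A (I(p)⁻¹ I(q)) = A (p⁻¹ q) / (conj (A p) · A q)`; taking square roots of absolute values gives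
the formula.
-/

noncomputable def Hmul {m : ℕ} (p q : EuclideanSpace ℂ (Fin m) × ℝ) :
    EuclideanSpace ℂ (Fin m) × ℝ :=
  (p.1 + q.1, p.2 + q.2 + 2 * (inner ℂ q.1 p.1 : ℂ).im)

def Hinv {m : ℕ} (p : EuclideanSpace ℂ (Fin m) × ℝ) : EuclideanSpace ℂ (Fin m) × ℝ :=
  (-p.1, -p.2)

noncomputable def cygan {m : ℕ} (p : EuclideanSpace ℂ (Fin m) × ℝ) : ℝ :=
  Real.sqrt ‖(((‖p.1‖ ^ 2 : ℝ) : ℂ) - p.2 * Complex.I)‖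

noncomputable def cyganDist {m : ℕ} (p q : EuclideanSpace ℂ (Fin m) × ℝ) : ℝ :=
  cygan (Hmul (Hinv p) q)

noncomputable def heisInversion {m : ℕ} (p : EuclideanSpace ℂ (Fin m) × ℝ) :
    EuclideanSpace ℂ (Fin m) × ℝ :=
  (((((‖p.1‖ ^ 2 : ℝ) : ℂ) - p.2 * Complex.I)⁻¹) • p.1,
    -p.2 / (p.2 ^ 2 + ‖p.1‖ ^ 4))

noncomputable def cyganComplex {m : ℕ} (p : EuclideanSpace ℂ (Fin m) × ℝ) : ℂ :=
  ((‖p.1‖ ^ 2 : ℝ) : ℂ) - p.2 * Complex.I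

section CyganComplex

variable {m : ℕ}

lemma cygan_eq_sqrt_norm_cyganComplex (p : EuclideanSpace ℂ (Fin m) × ℝ) :
    cygan p = Real.sqrt ‖cyganComplex p‖ := rfl

@[simp]
lemma cyganComplex_re (p : EuclideanSpace ℂ (Fin m) × ℝ) :
    (cyganComplex p).re = ‖p.1‖ ^ 2 := by
  simp [cyganComplex, -Complex.ofReal_pow]

@[simp]
lemma cyganComplex_im (p : EuclideanSpace ℂ (Fin m) × ℝ) : (cyganComplex p).im = -p.2 := by
  simp [cyganComplex, -Complex.ofReal_pow]

lemma cyganComplex_ne_zero {p : EuclideanSpace ℂ (Fin m) × ℝ} (hp : p ≠ (0, 0)) :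
    cyganComplex p ≠ 0 := by
  intro h
  have hre : ‖p.1‖ ^ 2 = 0 := by simpa using congrArg Complex.re h
  have him : -p.2 = 0 := by simpa using congrArg Complex.im h
  exact hp (Prod.ext (by simpa using hre) (by simpa using him))

lemma normSq_cyganComplex (p : EuclideanSpace ℂ (Fin m) × ℝ) :
    Complex.normSq (cyganComplex p) = p.2 ^ 2 + ‖p.1‖ ^ 4 := by
  rw [Complex.normSq_apply, cyganComplex_re, cyganComplex_im]
  ring

lemma cyganComplex_Hmul_Hinv (p q : EuclideanSpace ℂ (Fin m) × ℝ) :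
    cyganComplex (Hmul (Hinv p) q)
      = starRingEnd ℂ (cyganComplex p) + cyganComplex q - 2 * inner ℂ p.1 q.1 := by
  have hconj : inner ℂ q.1 p.1 = starRingEnd ℂ (inner ℂ p.1 q.1) := (inner_conj_symm q.1 p.1).symm
  have hnorm : ‖-p.1 + q.1‖ ^ 2 = ‖q.1‖ ^ 2 - 2 * (inner ℂ p.1 q.1).re + ‖p.1‖ ^ 2 := by
    rw [neg_add_eq_sub, norm_sub_sq (𝕜 := ℂ) q.1 p.1, hconj, RCLike.conj_re]
    rfl
  simp only [cyganComplex, Hmul, Hinv, inner_neg_right, Complex.neg_im, hconj, hnorm]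
  generalize inner ℂ p.1 q.1 = z
  apply Complex.ext <;> simp [-Complex.ofReal_pow] <;> ring

lemma cyganComplex_heisInversion (p : EuclideanSpace ℂ (Fin m) × ℝ) :
    cyganComplex (heisInversion p) = (cyganComplex p)⁻¹ := by
  have hnorm : ‖(cyganComplex p)⁻¹ • p.1‖ ^ 2 = ‖p.1‖ ^ 2 / Complex.normSq (cyganComplex p) := by
    rw [norm_smul, mul_pow, norm_inv, inv_pow, Complex.sq_norm, div_eq_inv_mul]
  apply Complex.ext
  · rw [cyganComplex_re, Complex.inv_re, cyganComplex_re]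
    exact hnorm
  · rw [cyganComplex_im, Complex.inv_im, cyganComplex_im, normSq_cyganComplex]
    simp only [heisInversion]
    ring

lemma inner_heisInversion (p q : EuclideanSpace ℂ (Fin m) × ℝ) :
    inner ℂ (heisInversion p).1 (heisInversion q).1
      = starRingEnd ℂ (cyganComplex p)⁻¹ * (cyganComplex q)⁻¹ * inner ℂ p.1 q.1 := by
  rw [heisInversion, heisInversion, inner_smul_left, inner_smul_right, mul_assoc]
  rfl

lemma cyganComplex_heisInversion_Hmul_Hinv {p q : EuclideanSpace ℂ (Fin m) × ℝ}
    (hp : cyganComplex p ≠ 0) (hq : cyganComplex q ≠ 0) :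
    cyganComplex (Hmul (Hinv (heisInversion p)) (heisInversion q))
      = cyganComplex (Hmul (Hinv p) q) / (starRingEnd ℂ (cyganComplex p) * cyganComplex q) := by
  have hp' : starRingEnd ℂ (cyganComplex p) ≠ 0 := by simpa using hp
  rw [cyganComplex_Hmul_Hinv, cyganComplex_Hmul_Hinv, cyganComplex_heisInversion,
    cyganComplex_heisInversion, inner_heisInversion, map_inv₀]
  field_simp
  ring

end CyganComplex

theorem heisInversion_cyganDist_general (n : ℕ)
    (p q : EuclideanSpace ℂ (Fin (n-1)) × ℝ) (hp : p ≠ (0, 0)) (hq : q ≠ (0, 0)) :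
    cyganDist (heisInversion p) (heisInversion q) = cyganDist p q / (cygan p * cygan q) := by
  simp only [cyganDist, cygan_eq_sqrt_norm_cyganComplex,
    cyganComplex_heisInversion_Hmul_Hinv (cyganComplex_ne_zero hp) (cyganComplex_ne_zero hq),
    norm_div, norm_mul, Complex.norm_conj]
  rw [Real.sqrt_div (norm_nonneg _), Real.sqrt_mul (norm_nonneg _)]

/-- under the Heisenberg inversion `I`, the Cygan distance transforms by
`ρ_c(I(p), I(q)) = ρ_c(p,q) / (||p||_c · ||q||_c)` for all `p, q ∈ H_n \ {0}`. -/
theorem heisInversion_cyganDist (n : ℕ) (hn : 2 ≤ n)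
    (p q : EuclideanSpace ℂ (Fin (n-1)) × ℝ) (hp : p ≠ (0, 0)) (hq : q ≠ (0, 0)) :
    cyganDist (heisInversion p) (heisInversion q) = cyganDist p q / (cygan p * cygan q) :=
  heisInversion_cyganDist_general n p q hp hq
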